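/- arXiv:2101.10481 — 7 statements merged into one kernel-verified Lean document; each statement's English description precedes it below -/
import Mathlib

section
/- The collection Λ defined from a cofunctor φ : B ⇸ A — with objects those of A and morphisms pairs (a, u) : a → p(a, u) for u : φa → b in B, identity (a, 1_{φa}), and composition (p(a,u), v) ∘ (a, u) = (a, v ∘ u) — forms a category, and the assignment (a,u) ↦ u defines a discrete opfibration Λ → B. -/
open CategoryTheory

universe w v u v₁ u₁ v₂ u₂ v₃ u₃

section Helpers

/-- The hom-type of a category structure, given explicitly. -/
def homOf {C : Type u₁} (cc : Category.{v₁} C) (x y : C) : Type v₁ :=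
  @Quiver.Hom C cc.toCategoryStruct.toQuiver x y

/-- Object part of a functor, with explicit category structures. -/
def objOf {C : Type u₁} {D : Type u₂} (cc : Category.{v₁} C) (cd : Category.{v₂} D)
    (F : @Functor C cc D cd) : C → D := F.obj

/-- Morphism part of a functor, with explicit category structures. -/
def mapOf {C : Type u₁} {D : Type u₂} (cc : Category.{v₁} C) (cd : Category.{v₂} D)
    (F : @Functor C cc D cd) {x y : C} (u : homOf cc x y) :
    homOf cd (objOf cc cd F x) (objOf cc cd F y) := F.map u

/-- Discrete opfibration: every morphism out of the image of an object has a unique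
lift with that source. -/
def IsDiscreteOpfibration {X : Type u₁} {Y : Type u₂} (cx : Category.{v₁} X)
    (cy : Category.{v₂} Y) (F : @Functor X cx Y cy) : Prop :=
  ∀ (x : X) (y : Y) (u : homOf cy (objOf cx cy F x) y),
    ∃! t : (Σ x' : X, homOf cx x x'),
      objOf cx cy F t.1 = y ∧ HEq (mapOf cx cy F t.2) u

/-- Fully faithful, as a property. -/
def IsFullyFaithfulP {X : Type u₁} {Y : Type u₂} (cx : Category.{v₁} X)
    (cy : Category.{v₂} Y) (F : @Functor X cx Y cy) : Prop :=
  ∀ (x x' : X) (u : homOf cy (objOf cx cy F x) (objOf cx cy F x')),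
    ∃! w : homOf cx x x', mapOf cx cy F w = u

end Helpers
/-- A cofunctor `B ⇸ A`: an object assignment `ob A → ob B` together with a lifting of
morphisms of `B` out of `obj a` to morphisms of `A` out of `a`, respecting codomains,
identities and composition. -/
structure Cofunctor (B : Type u₂) (A : Type u₁) [Category.{v₂} B] [Category.{v₁} A] where
  obj : A → B
  tgt : ∀ (a : A) {b : B}, (obj a ⟶ b) → A
  map : ∀ (a : A) {b : B} (u : obj a ⟶ b), a ⟶ tgt a u
  obj_tgt : ∀ (a : A) {b : B} (u : obj a ⟶ b), obj (tgt a u) = b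
  tgt_id : ∀ a : A, tgt a (𝟙 (obj a)) = a
  map_id : ∀ a : A, HEq (map a (𝟙 (obj a))) (𝟙 a)
  tgt_comp : ∀ (a : A) {b c : B} (u : obj a ⟶ b) (v : b ⟶ c)
    (v' : obj (tgt a u) ⟶ c), HEq v' v → tgt a (u ≫ v) = tgt (tgt a u) v'
  map_comp : ∀ (a : A) {b c : B} (u : obj a ⟶ b) (v : b ⟶ c)
    (v' : obj (tgt a u) ⟶ c), HEq v' v →
    HEq (map a (u ≫ v)) (map a u ≫ map (tgt a u) v')

section Construction

variable {A B : Type u} [ca : Category.{v} A] [cb : Category.{v} B] (φ : Cofunctor B A)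

/-- Hom-type of the image category. -/
def LHom (a a' : A) : Type (max u v) :=
  Σ b : B, { u : φ.obj a ⟶ b // φ.tgt a u = a' }

variable {φ}

theorem LHom.obj_eq {a a' : A} (w : LHom φ a a') : w.1 = φ.obj a' := by
  obtain ⟨b, u, h⟩ := w; subst h; exact (φ.obj_tgt a u).symm

theorem tgt_congr {a₁ a₂ : A} (h : a₁ = a₂) {b : B} {u₁ : φ.obj a₁ ⟶ b}
    {u₂ : φ.obj a₂ ⟶ b} (hu : HEq u₁ u₂) : φ.tgt a₁ u₁ = φ.tgt a₂ u₂ := by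
  subst h; rw [eq_of_heq hu]

variable (φ)

/-- Identity of the image category. -/
def lid (a : A) : LHom φ a a := ⟨φ.obj a, 𝟙 _, φ.tgt_id a⟩

/-- Composition of the image category. -/
def lcomp {a a' a'' : A} (w : LHom φ a a') (w' : LHom φ a' a'') : LHom φ a a'' :=
  ⟨w'.1, w.2.1 ≫ eqToHom w.obj_eq ≫ w'.2.1, by
    have hv : HEq (eqToHom (congrArg φ.obj w.2.2) ≫ w'.2.1 :
        φ.obj (φ.tgt a w.2.1) ⟶ w'.1) (eqToHom w.obj_eq ≫ w'.2.1) :=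
      (eqToHom_comp_heq _ _).trans (eqToHom_comp_heq _ _).symm
    exact (φ.tgt_comp a w.2.1 _ _ hv).trans
      ((tgt_congr w.2.2 (eqToHom_comp_heq w'.2.1 (congrArg φ.obj w.2.2))).trans w'.2.2)⟩

theorem LHom.ext {a a' : A} {w w' : LHom φ a a'} (h1 : w.1 = w'.1)
    (h2 : HEq w.2.1 w'.2.1) : w = w' := by
  obtain ⟨b, u, h⟩ := w
  obtain ⟨b', u', h'⟩ := w'
  dsimp at h1 h2
  subst h1
  cases h2
  rfl

/-- The image category. -/
def Lcat : Category.{max u v} A where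
  Hom := LHom φ
  id := lid φ
  comp := lcomp φ
  id_comp w := by
    refine LHom.ext φ rfl ?_
    show HEq ((lid φ _).2.1 ≫ eqToHom _ ≫ w.2.1) w.2.1
    dsimp only [lid]
    rw [Category.id_comp]
    exact eqToHom_comp_heq _ _
  comp_id w := by
    refine LHom.ext φ (w.obj_eq).symm ?_
    show HEq (w.2.1 ≫ eqToHom _ ≫ (lid φ _).2.1) w.2.1
    dsimp only [lid]
    rw [Category.comp_id]
    exact comp_eqToHom_heq _ _
  assoc w w' w'' := by
    refine LHom.ext φ rfl ?_
    show HEq ((lcomp φ w w').2.1 ≫ eqToHom _ ≫ w''.2.1)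
      (w.2.1 ≫ eqToHom _ ≫ (lcomp φ w' w'').2.1)
    simp only [lcomp, Category.assoc]
    exact HEq.rfl

/-- The projection functor. -/
def Lproj : @Functor A (Lcat φ) B cb :=
  letI : Category.{max u v} A := Lcat φ
  { obj := φ.obj
    map := fun {a a'} (w : LHom φ a a') => w.2.1 ≫ eqToHom w.obj_eq
    map_id := fun a => by
      show (lid φ a).2.1 ≫ eqToHom _ = 𝟙 _
      simp [lid]
    map_comp := fun {a a' a''} w w' => by
      show (lcomp φ w w').2.1 ≫ eqToHom _ = (w.2.1 ≫ eqToHom _) ≫ (w'.2.1 ≫ eqToHom _)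
      simp [lcomp] }

end Construction

/-- The image `Λ` of a cofunctor `φ : B ⇸ A` — with objects those of `A` and morphisms
`a ⟶ a'` the pairs `(a, u)` where `u : φ a ⟶ b` in `B` and `p (a, u) = a'` — forms a
category, and the assignment `(a, u) ↦ u` defines a discrete opfibration `Λ → B` whose
object part is `φ`'s object assignment. -/
theorem cofunctor_image_category {A B : Type u} [ca : Category.{v} A]
    [cb : Category.{v} B] (φ : Cofunctor B A) :
    ∃ (cΛ : Category.{max u v} A) (gbar : @Functor A cΛ B cb),
      ∃ hty : ∀ a a' : A, homOf cΛ a a' = Σ b : B, { u : φ.obj a ⟶ b // φ.tgt a u = a' },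
        (∀ a : A, objOf cΛ cb gbar a = φ.obj a) ∧
        (∀ (a a' : A) (w : homOf cΛ a a'),
          HEq (mapOf cΛ cb gbar w) (cast (hty a a') w).2.1) ∧
        IsDiscreteOpfibration cΛ cb gbar := by
  refine ⟨Lcat φ, Lproj φ, fun a a' => rfl, fun a => rfl, ?_, ?_⟩
  · intro a a' w
    show HEq (w.2.1 ≫ eqToHom w.obj_eq) w.2.1
    exact comp_eqToHom_heq _ _
  · intro x y u
    show ∃! t : (Σ x' : A, LHom φ x x'),
      φ.obj t.1 = y ∧ HEq (t.2.2.1 ≫ eqToHom t.2.obj_eq) u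
    refine ⟨⟨φ.tgt x u, ⟨y, u, rfl⟩⟩,
      ⟨φ.obj_tgt x u, comp_eqToHom_heq _ _⟩, ?_⟩
    rintro ⟨x', b, v, h⟩ ⟨h1, h2⟩
    dsimp at h1 h2 ⊢
    subst h
    have hb : b = y := (φ.obj_tgt x v).symm.trans h1
    subst hb
    have hv : v = u := eq_of_heq ((comp_eqToHom_heq v _).symm.trans h2)
    subst hv
    rfl
end

section
/- An asymmetric delta lens (f, φ) : A ⇌ B can be represented as a commutative triangle of functors φ : Λ → A, φ̄ : Λ → B with f ∘ φ = φ̄, where φ is identity-on-objects and φ̄ is a discrete opfibration. Conversely, any such commutative triangle with φ identity-on-objects and φ̄ a discrete opfibration determines a lens (f, φ) : A ⇌ B. -/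
open CategoryTheory

universe w v u v₁ u₁ v₂ u₂ v₃ u₃

/-- An asymmetric delta lens `A ⇌ B`: a Get functor together with a Put operation
lifting morphisms of `B` out of `get.obj a` to morphisms of `A` out of `a`, satisfying
the PutGet, GetPut and PutPut laws. -/
structure Lens (A : Type u₁) (B : Type u₂) [Category.{v₁} A] [Category.{v₂} B] where
  get : A ⥤ B
  tgt : ∀ (a : A) {b : B}, (get.obj a ⟶ b) → A
  put : ∀ (a : A) {b : B} (u : get.obj a ⟶ b), a ⟶ tgt a u
  obj_tgt : ∀ (a : A) {b : B} (u : get.obj a ⟶ b), get.obj (tgt a u) = b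
  putget : ∀ (a : A) {b : B} (u : get.obj a ⟶ b), HEq (get.map (put a u)) u
  tgt_id : ∀ a : A, tgt a (𝟙 (get.obj a)) = a
  getput : ∀ a : A, HEq (put a (𝟙 (get.obj a))) (𝟙 a)
  tgt_comp : ∀ (a : A) {b c : B} (u : get.obj a ⟶ b) (v : b ⟶ c)
    (v' : get.obj (tgt a u) ⟶ c), HEq v' v → tgt a (u ≫ v) = tgt (tgt a u) v'
  putput : ∀ (a : A) {b c : B} (u : get.obj a ⟶ b) (v : b ⟶ c)
    (v' : get.obj (tgt a u) ⟶ c), HEq v' v →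
    HEq (put a (u ≫ v)) (put a u ≫ put (tgt a u) v')

/-! A lens `(f, φ)` yields the category `Λ` whose morphisms `a → a'` are the `u : f a ⟶ f a'` with
`p(a, u) = a'`; PutPut and GetPut make it a category and `φ` a functor, PutGet is the commuting
triangle, and the unique lift of `u : f a ⟶ b` is `u` itself, landing on `p(a, u)`.
Conversely a discrete opfibration `φ̄ : Λ ⥤ B` is a lens with Put the unique lift, its laws being
instances of uniqueness; this lens is then carried along `φ`, which is bijective on objects and
satisfies `φ ⋙ f = φ̄`, to a lens with Get `f`. -/

theorem CategoryTheory.Functor.map_heq_map {C : Type*} {D : Type*} [Category C] [Category D]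
    (F : C ⥤ D) {x x' y y' : C} (hx : x = x') (hy : y = y') {g : x ⟶ y} {g' : x' ⟶ y'}
    (hg : g ≍ g') : F.map g ≍ F.map g' := by
  subst hx hy
  rw [eq_of_heq hg]

namespace Lens

variable {A : Type u₁} {B : Type u₂} [Category.{v₁} A] [Category.{v₂} B] (l : Lens A B)

theorem tgt_congr {x x' : A} (hx : x = x') {b : B} {u : l.get.obj x ⟶ b}
    {u' : l.get.obj x' ⟶ b} (hu : u ≍ u') : l.tgt x u = l.tgt x' u' := by
  subst hx
  rw [eq_of_heq hu]

theorem put_congr {x x' : A} (hx : x = x') {b : B} {u : l.get.obj x ⟶ b}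
    {u' : l.get.obj x' ⟶ b} (hu : u ≍ u') : l.put x u ≍ l.put x' u' := by
  subst hx
  rw [eq_of_heq hu]

theorem tgt_eqToHom (x : A) {b : B} (h : l.get.obj x = b) : l.tgt x (eqToHom h) = x := by
  subst h
  exact l.tgt_id x

theorem put_eqToHom (x : A) {b : B} (h : l.get.obj x = b) : l.put x (eqToHom h) ≍ 𝟙 x := by
  subst h
  exact l.getput x

theorem tgt_comp_eqToHom (x : A) {b c : B} (u : l.get.obj x ⟶ b) (h : b = c) :
    l.tgt x (u ≫ eqToHom h) = l.tgt x u := by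
  subst h
  rw [eqToHom_refl, Category.comp_id]

theorem tgt_comp_of_tgt_eq {a a' a'' : A} {u : l.get.obj a ⟶ l.get.obj a'}
    {v : l.get.obj a' ⟶ l.get.obj a''} (hu : l.tgt a u = a') (hv : l.tgt a' v = a'') :
    l.tgt a (u ≫ v) = a'' :=
  have hv' := eqToHom_comp_heq v (congrArg l.get.obj hu)
  ((l.tgt_comp a u v _ hv').trans (l.tgt_congr hu hv')).trans hv

theorem put_comp_of_tgt_eq {a a' a'' : A} {u : l.get.obj a ⟶ l.get.obj a'}
    {v : l.get.obj a' ⟶ l.get.obj a''} (hu : l.tgt a u = a') (hv : l.tgt a' v = a'') :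
    l.put a (u ≫ v) ≫ eqToHom (l.tgt_comp_of_tgt_eq hu hv) =
      (l.put a u ≫ eqToHom hu) ≫ l.put a' v ≫ eqToHom hv := by
  have hv' := eqToHom_comp_heq v (congrArg l.get.obj hu)
  apply eq_of_heq
  rw [comp_eqToHom_heq_iff, ← Category.assoc, heq_comp_eqToHom_iff]
  exact (l.putput a u v _ hv').trans <|
    heq_comp rfl hu (l.tgt_congr hu hv') (comp_eqToHom_heq _ _).symm (l.put_congr hu hv')

theorem map_put_comp_eqToHom {a a' : A} {u : l.get.obj a ⟶ l.get.obj a'}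
    (hu : l.tgt a u = a') : l.get.map (l.put a u ≫ eqToHom hu) ≍ u := by
  rw [Functor.map_comp, eqToHom_map, comp_eqToHom_heq_iff]
  exact l.putget a u

def Λ (_ : Lens A B) : Type u₁ := A

-- The morphism `(a, u) : a → p(a, u)` of `Λ`; `tgt_hom` identifies `p(a, u)` with `a'`.
@[ext]
structure ΛHom (a a' : A) : Type max u₁ v₂ where
  hom : l.get.obj a ⟶ l.get.obj a'
  tgt_hom : l.tgt a hom = a'

theorem ΛHom.hext {a a' a'' : A} (h : a' = a'') {m : l.ΛHom a a'} {m' : l.ΛHom a a''}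
    (hm : m.hom ≍ m'.hom) : m ≍ m' := by
  subst h
  exact heq_of_eq (ΛHom.ext (eq_of_heq hm))

instance : Category.{max u₁ v₂} l.Λ where
  Hom := l.ΛHom
  id a := ⟨𝟙 _, l.tgt_id a⟩
  comp m n := ⟨m.hom ≫ n.hom, l.tgt_comp_of_tgt_eq m.tgt_hom n.tgt_hom⟩
  id_comp _ := ΛHom.ext (Category.id_comp _)
  comp_id _ := ΛHom.ext (Category.comp_id _)
  assoc _ _ _ := ΛHom.ext (Category.assoc _ _ _)

def φ : l.Λ ⥤ A where
  obj a := a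
  map m := l.put _ m.hom ≫ eqToHom m.tgt_hom
  map_id a := eq_of_heq ((comp_eqToHom_heq _ _).trans (l.getput a))
  map_comp m n := l.put_comp_of_tgt_eq m.tgt_hom n.tgt_hom

def φbar : l.Λ ⥤ B where
  obj := l.get.obj
  map m := m.hom

theorem φ_comp_get : l.φ ⋙ l.get = l.φbar :=
  Functor.hext (fun _ => rfl) fun _ _ m => l.map_put_comp_eqToHom m.tgt_hom

theorem isDiscreteOpfibration_φbar :
    IsDiscreteOpfibration inferInstance inferInstance l.φbar := by
  intro (x : A) y (u : l.get.obj x ⟶ y)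
  refine ⟨⟨l.tgt x u, ⟨u ≫ eqToHom (l.obj_tgt x u).symm, l.tgt_comp_eqToHom x u _⟩⟩,
    ⟨l.obj_tgt x u, comp_eqToHom_heq _ _⟩, ?_⟩
  rintro ⟨x', ⟨w, hw⟩⟩ ⟨rfl, hm⟩
  obtain rfl := eq_of_heq hm
  exact Sigma.ext hw.symm (ΛHom.hext l hw.symm (comp_eqToHom_heq _ _).symm)

end Lens

namespace IsDiscreteOpfibration

variable {X : Type*} {Y : Type*} [Category X] [Category Y] {F : X ⥤ Y}
  (hF : IsDiscreteOpfibration inferInstance inferInstance F)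

noncomputable def lift (x : X) {y : Y} (u : F.obj x ⟶ y) : Σ x' : X, x ⟶ x' :=
  (hF x y u).exists.choose

theorem obj_lift (x : X) {y : Y} (u : F.obj x ⟶ y) : F.obj (hF.lift x u).1 = y :=
  (hF x y u).exists.choose_spec.1

theorem map_lift (x : X) {y : Y} (u : F.obj x ⟶ y) : F.map (hF.lift x u).2 ≍ u :=
  (hF x y u).exists.choose_spec.2

theorem eq_lift {x : X} {y : Y} {u : F.obj x ⟶ y} (t : Σ x' : X, x ⟶ x')
    (ht : F.obj t.1 = y) (hu : F.map t.2 ≍ u) : t = hF.lift x u :=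
  (hF x y u).unique ⟨ht, hu⟩ (hF x y u).exists.choose_spec

theorem lift_id (x : X) : hF.lift x (𝟙 (F.obj x)) = ⟨x, 𝟙 x⟩ :=
  (hF.eq_lift ⟨x, 𝟙 x⟩ rfl (by simp)).symm

theorem lift_comp (x : X) {y z : Y} (u : F.obj x ⟶ y) (v : y ⟶ z)
    (v' : F.obj (hF.lift x u).1 ⟶ z) (hv : v' ≍ v) :
    hF.lift x (u ≫ v) = ⟨(hF.lift _ v').1, (hF.lift x u).2 ≫ (hF.lift _ v').2⟩ :=
  (hF.eq_lift ⟨_, (hF.lift x u).2 ≫ (hF.lift _ v').2⟩ (hF.obj_lift _ v') <| by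
    rw [F.map_comp]
    exact heq_comp rfl (hF.obj_lift x u) (hF.obj_lift _ v') (hF.map_lift x u)
      ((hF.map_lift _ v').trans hv)).symm

end IsDiscreteOpfibration

namespace Lens

variable {X : Type*} {A : Type*} {B : Type*} [Category X] [Category A] [Category B]

noncomputable def ofDiscreteOpfibration {F : X ⥤ B}
    (hF : IsDiscreteOpfibration inferInstance inferInstance F) : Lens X B where
  get := F
  tgt x _ u := (hF.lift x u).1
  put x _ u := (hF.lift x u).2
  obj_tgt x _ u := hF.obj_lift x u
  putget x _ u := hF.map_lift x u
  tgt_id x := by rw [hF.lift_id]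
  getput x := by rw [hF.lift_id]
  tgt_comp x _ _ u v v' hv := by rw [hF.lift_comp x u v v' hv]
  putput x _ _ u v v' hv := by rw [hF.lift_comp x u v v' hv]

variable (L : Lens X B) {p : X ⥤ A} {f : A ⥤ B} {s : A → X}

theorem get_obj_eq (h : p ⋙ f = L.get) (hps : Function.RightInverse s p.obj) (a : A) :
    L.get.obj (s a) = f.obj a := by
  rw [← h, Functor.comp_obj, hps a]

noncomputable def pushforward (h : p ⋙ f = L.get) (hsp : Function.LeftInverse s p.obj)
    (hps : Function.RightInverse s p.obj) : Lens A B where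
  get := f
  tgt a _ u := p.obj (L.tgt (s a) (eqToHom (L.get_obj_eq h hps a) ≫ u))
  put a _ u := eqToHom (hps a).symm ≫ p.map (L.put (s a) (eqToHom (L.get_obj_eq h hps a) ≫ u))
  obj_tgt a _ u := (Functor.congr_obj h _).trans (L.obj_tgt _ _)
  putget a _ u := by
    rw [f.map_comp, eqToHom_map, eqToHom_comp_heq_iff, ← Functor.comp_map]
    exact (Functor.hcongr_hom h _).trans ((L.putget _ _).trans (eqToHom_comp_heq _ _))
  tgt_id a := by rw [Category.comp_id, L.tgt_eqToHom, hps a]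
  getput a := by
    rw [eqToHom_comp_heq_iff, Category.comp_id]
    refine (p.map_heq_map rfl (L.tgt_eqToHom _ _) (L.put_eqToHom _ _)).trans ?_
    rw [p.map_id, hps a]
  tgt_comp a _ _ u v v' hv := by
    have hv' : eqToHom (Functor.congr_obj h _).symm ≫ v' ≍ v := (eqToHom_comp_heq _ _).trans hv
    rw [← Category.assoc, L.tgt_comp _ _ v _ hv']
    exact congrArg p.obj (L.tgt_congr (hsp _).symm (by simp))
  putput a _ _ u v v' hv := by
    have hv' : eqToHom (Functor.congr_obj h _).symm ≫ v' ≍ v := (eqToHom_comp_heq _ _).trans hv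
    rw [Category.assoc, eqToHom_comp_heq_iff, heq_eqToHom_comp_iff, ← Category.assoc _ u v]
    refine (p.map_heq_map rfl (L.tgt_comp _ _ v _ hv') (L.putput _ _ v _ hv')).trans ?_
    rw [p.map_comp]
    refine heq_comp rfl rfl (congrArg p.obj (L.tgt_congr (hsp _).symm (by simp))) .rfl ?_
    rw [heq_eqToHom_comp_iff]
    exact p.map_heq_map (hsp _).symm (L.tgt_congr (hsp _).symm (by simp))
      (L.put_congr (hsp _).symm (by simp))

end Lens

/-- A lens `(f, φ) : A ⇌ B` is the same thing as a commutative triangle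
`φ̄ = f ∘ φ : Λ → B` where `φ : Λ → A` is identity-on-objects and `φ̄ : Λ → B` is a
discrete opfibration.  Forwards: every lens yields such a triangle (with `Λ` a category
structure on the objects of `A`, and `φ̄` acting as `f` on objects).  Backwards: every
such triangle (over any category structure `cΛ` on the objects of `A`) determines a
lens with Get `f`. -/
theorem lens_representation {A B : Type u} [ca : Category.{v} A] [cb : Category.{v} B] :
    (∀ l : Lens A B,
      ∃ (cΛ : Category.{max u v} A) (p : @Functor A cΛ A ca) (gbar : @Functor A cΛ B cb),
        (∀ a : A, objOf cΛ ca p a = a) ∧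
        IsDiscreteOpfibration cΛ cb gbar ∧
        @Functor.comp A cΛ A ca B cb p l.get = gbar) ∧
    (∀ (f : A ⥤ B) (cΛ : Category.{w} A) (p : @Functor A cΛ A ca)
        (gbar : @Functor A cΛ B cb),
        (∀ a : A, objOf cΛ ca p a = a) →
        IsDiscreteOpfibration cΛ cb gbar →
        @Functor.comp A cΛ A ca B cb p f = gbar →
        ∃ l : @Lens A B ca cb, @Lens.get A B ca cb l = f) := by
  refine ⟨fun l => ⟨inferInstanceAs (Category l.Λ), l.φ, l.φbar, fun _ => rfl,
    l.isDiscreteOpfibration_φbar, l.φ_comp_get⟩, ?_⟩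
  rintro f cΛ p _ hp hopf rfl
  exact ⟨@Lens.pushforward A A B cΛ ca cb (@Lens.ofDiscreteOpfibration A B cΛ cb _ hopf)
    p f id rfl hp hp, rfl⟩
end

section
/- Every Mealy morphism A ⇸ B factorizes as a discrete opfibration followed by a functor: given a Mealy morphism (X₀, g₀, f₀, q, f), there is a category X with object set X₀ and morphisms (x, u) : x → q(x,u) for u : g₀x → a in A, such that the projection ḡ : X → A sending (x,u) to u is a discrete opfibration, and the assignment x ↦ f₀x, (x,u) ↦ f(x,u) defines a functor X → B. -/
open CategoryTheory

universe w v u v₁ u₁ v₂ u₂ v₃ u₃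

/-- A Mealy morphism `A ⇸ B`: a span of functions `A ← X₀ → B` on a set `X₀` (a discrete
category) together with operations transporting a morphism of `A` out of `g₀ x` to a new
state `q x u ∈ X₀` over its codomain and an output morphism `f x u` in `B`. -/
structure Mealy (A : Type u₁) (B : Type u₂) [Category.{v₁} A] [Category.{v₂} B] where
  X₀ : Type u₁
  g₀ : X₀ → A
  f₀ : X₀ → B
  q : ∀ (x : X₀) {a : A}, (g₀ x ⟶ a) → X₀
  f : ∀ (x : X₀) {a : A} (u : g₀ x ⟶ a), f₀ x ⟶ f₀ (q x u)
  g_q : ∀ (x : X₀) {a : A} (u : g₀ x ⟶ a), g₀ (q x u) = a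
  q_id : ∀ x : X₀, q x (𝟙 (g₀ x)) = x
  f_id : ∀ x : X₀, HEq (f x (𝟙 (g₀ x))) (𝟙 (f₀ x))
  q_comp : ∀ (x : X₀) {a a' : A} (u : g₀ x ⟶ a) (v : a ⟶ a')
    (v' : g₀ (q x u) ⟶ a'), HEq v' v → q x (u ≫ v) = q (q x u) v'
  f_comp : ∀ (x : X₀) {a a' : A} (u : g₀ x ⟶ a) (v : a ⟶ a')
    (v' : g₀ (q x u) ⟶ a'), HEq v' v →
    HEq (f x (u ≫ v)) (f x u ≫ f (q x u) v')

section MealyCat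

variable {A B : Type u} [ca : Category.{v} A] [cb : Category.{v} B] (m : Mealy A B)

/-- Morphisms of the category built from a Mealy morphism. -/
def MHom (x y : m.X₀) : Type (max u v) :=
  ULift.{u} {u' : m.g₀ x ⟶ m.g₀ y // m.q x u' = y}

theorem MHom.ext {x y : m.X₀} {w w' : MHom m x y}
    (h : w.down.val = w'.down.val) : w = w' := by
  obtain ⟨⟨u, hu⟩⟩ := w; obtain ⟨⟨u', hu'⟩⟩ := w'
  cases h; rfl

/-- Congruence for `q` across an equality of codomains. -/
theorem q_congr {x : m.X₀} {a a' : A} (h : a = a') (w : m.g₀ x ⟶ a)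
    (u : m.g₀ x ⟶ a') (hw : HEq w u) : m.q x w = m.q x u := by
  subst h; cases hw; rfl

/-- Congruence for `f` across an equality of codomains. -/
theorem f_congr {x : m.X₀} {a a' : A} (h : a = a') (w : m.g₀ x ⟶ a)
    (u : m.g₀ x ⟶ a') (hw : HEq w u) : HEq (m.f x w) (m.f x u) := by
  subst h; cases hw; rfl

/-- Congruence for `q` across an equality of states. -/
theorem q_congr' {x x' : m.X₀} (h : x = x') {a : A} (w : m.g₀ x ⟶ a)
    (u : m.g₀ x' ⟶ a) (hw : HEq w u) : m.q x w = m.q x' u := by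
  subst h; cases hw; rfl

/-- Congruence for `f` across an equality of states. -/
theorem f_congr' {x x' : m.X₀} (h : x = x') {a : A} (w : m.g₀ x ⟶ a)
    (u : m.g₀ x' ⟶ a) (hw : HEq w u) : HEq (m.f x w) (m.f x' u) := by
  subst h; cases hw; rfl

def mid (x : m.X₀) : MHom m x x := ⟨⟨𝟙 (m.g₀ x), m.q_id x⟩⟩

def mcomp {x y z : m.X₀} (w : MHom m x y) (w' : MHom m y z) : MHom m x z :=
  ⟨⟨w.down.val ≫ w'.down.val, by
    obtain ⟨⟨u, hu⟩⟩ := w; obtain ⟨⟨v, hv⟩⟩ := w'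
    have h1 : m.q x (u ≫ v) = m.q (m.q x u) (eqToHom (congrArg m.g₀ hu) ≫ v) :=
      m.q_comp x u v _ (eqToHom_comp_heq _ _)
    rw [h1, q_congr' m hu (eqToHom (congrArg m.g₀ hu) ≫ v) v (eqToHom_comp_heq _ _)]
    exact hv⟩⟩

def mealyCat : Category.{max u v} m.X₀ where
  Hom := MHom m
  id := mid m
  comp := mcomp m
  id_comp w := MHom.ext m (Category.id_comp _)
  comp_id w := MHom.ext m (Category.comp_id _)
  assoc w w' w'' := MHom.ext m (Category.assoc _ _ _)

end MealyCat
section MealyFunctors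

variable {A B : Type u} [ca : Category.{v} A] [cb : Category.{v} B] (m : Mealy A B)

def mgbar : @Functor m.X₀ (mealyCat m) A ca :=
  letI : Category.{max u v} m.X₀ := mealyCat m
  { obj := m.g₀
    map := fun w => w.down.val
    map_id := fun _ => rfl
    map_comp := fun _ _ => rfl }

def mfmap {x y : m.X₀} (w : MHom m x y) : m.f₀ x ⟶ m.f₀ y :=
  m.f x w.down.val ≫ eqToHom (congrArg m.f₀ w.down.prop)

theorem comp_eqToHom_eq_of_heq {X Y Y' : B} (h : Y' = Y) (φ : X ⟶ Y') (ψ : X ⟶ Y)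
    (hh : HEq φ ψ) : φ ≫ eqToHom (congrArg id h) = ψ := by
  subst h; simpa using eq_of_heq hh

def mfX : @Functor m.X₀ (mealyCat m) B cb :=
  letI : Category.{max u v} m.X₀ := mealyCat m
  { obj := m.f₀
    map := mfmap m
    map_id := fun x => by
      show m.f x (𝟙 (m.g₀ x)) ≫ eqToHom _ = 𝟙 (m.f₀ x)
      apply eq_of_heq
      exact (comp_eqToHom_heq _ _).trans (m.f_id x)
    map_comp := fun {x y z} w w' => by
      obtain ⟨⟨u, hu⟩⟩ := w; obtain ⟨⟨v, hv⟩⟩ := w'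
      show m.f x (u ≫ v) ≫ eqToHom _ =
        (m.f x u ≫ eqToHom (congrArg m.f₀ hu)) ≫ (m.f y v ≫ eqToHom (congrArg m.f₀ hv))
      apply eq_of_heq
      set v' : m.g₀ (m.q x u) ⟶ m.g₀ z := eqToHom (congrArg m.g₀ hu) ≫ v with hv'
      have hvv : HEq v' v := eqToHom_comp_heq _ _
      refine ((comp_eqToHom_heq _ _).trans (m.f_comp x u v v' hvv)).trans (HEq.symm ?_)
      refine heq_comp (by rfl) (congrArg m.f₀ hu.symm)
        (congrArg m.f₀ (hv.symm.trans (q_congr' m hu v' v hvv).symm))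
        (comp_eqToHom_heq _ _) ?_
      exact (comp_eqToHom_heq _ _).trans (f_congr' m hu.symm v v' hvv.symm) }

end MealyFunctors

/-- Every Mealy morphism `A ⇸ B` factorises as a discrete opfibration followed by a
functor: there is a category structure on the state set `X₀` (the image `X`), a discrete
opfibration `ḡ : X → A` acting as `g₀` on objects, and a functor `X → B` acting as `f₀`
on objects, such that for each state `x` and each `u : g₀ x ⟶ a` the canonical morphism
`(x, u) : x ⟶ q x u` of `X` lies over `u` and is sent by the second functor to the
output morphism `f x u`. -/
theorem mealy_factorisation {A B : Type u} [ca : Category.{v} A] [cb : Category.{v} B]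
    (m : Mealy A B) :
    ∃ (cX : Category.{max u v} m.X₀) (gbar : @Functor m.X₀ cX A ca)
      (fX : @Functor m.X₀ cX B cb),
      (∀ x : m.X₀, objOf cX ca gbar x = m.g₀ x) ∧
      (∀ x : m.X₀, objOf cX cb fX x = m.f₀ x) ∧
      IsDiscreteOpfibration cX ca gbar ∧
      ∀ (x : m.X₀) (a : A) (u : m.g₀ x ⟶ a),
        ∃ w : homOf cX x (m.q x u),
          HEq (mapOf cX ca gbar w) u ∧ HEq (mapOf cX cb fX w) (m.f x u) := by
  classical
  refine ⟨mealyCat m, mgbar m, mfX m, fun x => rfl, fun x => rfl, ?_, ?_⟩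
  · intro x y u
    refine ⟨⟨m.q x u, ⟨⟨u ≫ eqToHom (m.g_q x u).symm,
        q_congr m (m.g_q x u) _ u (comp_eqToHom_heq _ _)⟩⟩⟩,
      ⟨m.g_q x u, comp_eqToHom_heq _ _⟩, ?_⟩
    rintro ⟨x', w⟩ ⟨h1, h2⟩
    obtain ⟨⟨wv, hw⟩⟩ := w
    have hx : x' = m.q x u := hw.symm.trans (q_congr m h1 wv u h2)
    subst hx
    exact congrArg (Sigma.mk (m.q x u))
      (MHom.ext m (eq_of_heq (h2.trans (comp_eqToHom_heq _ _).symm)))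
  · intro x a u
    refine ⟨⟨⟨u ≫ eqToHom (m.g_q x u).symm,
        q_congr m (m.g_q x u) _ u (comp_eqToHom_heq _ _)⟩⟩,
      comp_eqToHom_heq _ _, ?_⟩
    exact (comp_eqToHom_heq _ _).trans
      (f_congr m (m.g_q x u) _ u (comp_eqToHom_heq _ _))
end

section
/- Every cofunctor φ : B ⇸ A determines a Mealy morphism B ⇸ A whose underlying span has apex the discrete category on ob(A), with left leg to B given by a ↦ φa, right leg to A the inclusion of objects, q(a, u : φa → b) = p(a,u), and lift given by φ(a,u) : a → p(a,u); this data satisfies the Mealy morphism axioms. -/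
open CategoryTheory

universe w v u v₁ u₁ v₂ u₂ v₃ u₃

/-- Every cofunctor `φ : B ⇸ A` determines a Mealy morphism `B ⇸ A`: its state set is
the set of objects of `A`, the left leg (to `B`) is `φ`'s object assignment, the right
leg (to `A`) is the inclusion of objects, the transition sends `(a, u : φa ⟶ b)` to
`p(a, u)`, and the output morphism is the lift `φ(a, u) : a ⟶ p(a, u)`. -/
theorem cofunctor_mealy {A B : Type u} [ca : Category.{v} A] [cb : Category.{v} B]
    (φ : Cofunctor B A) :
    ∃ m : Mealy B A, ∃ h : m.X₀ = A,
      (∀ x : m.X₀, m.g₀ x = φ.obj (cast h x)) ∧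
      (∀ x : m.X₀, m.f₀ x = cast h x) ∧
      ∀ (x : m.X₀) (b : B) (u : m.g₀ x ⟶ b) (u' : φ.obj (cast h x) ⟶ b), HEq u' u →
        cast h (m.q x u) = φ.tgt (cast h x) u' ∧
        HEq (m.f x u) (φ.map (cast h x) u') := by
  refine ⟨⟨A, φ.obj, id, φ.tgt, φ.map, φ.obj_tgt, φ.tgt_id, φ.map_id, φ.tgt_comp,
    φ.map_comp⟩, rfl, fun _ => rfl, fun _ => rfl, ?_⟩
  intro x b u u' hu
  cases eq_of_heq hu
  exact ⟨rfl, HEq.rfl⟩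
end

section
/- The forgetful functor Lens → Cat (sending a lens to its Get functor) sends the fake pullback of a cospan of lenses to a genuine pullback square in Cat. -/
open CategoryTheory

universe w v u v₁ u₁ v₂ u₂ v₃ u₃

section Pullback

variable {A B C : Type u} [Category.{v} A] [Category.{v} B] [Category.{v} C]

/-- The pullback of two functors in `Cat`: objects are pairs whose images agree. -/
def PB (f : A ⥤ B) (g : C ⥤ B) : Type u := { p : A × C // f.obj p.1 = g.obj p.2 }

/-- Morphisms in the pullback category: pairs of morphisms whose images agree. -/
@[ext] structure PBHom {f : A ⥤ B} {g : C ⥤ B} (x y : PB f g) where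
  m1 : x.1.1 ⟶ y.1.1
  m2 : x.1.2 ⟶ y.1.2
  w : f.map m1 ≫ eqToHom y.2 = eqToHom x.2 ≫ g.map m2

instance PB.category (f : A ⥤ B) (g : C ⥤ B) : Category.{v} (PB f g) where
  Hom x y := PBHom x y
  id x := ⟨𝟙 _, 𝟙 _, by simp⟩
  comp m n := ⟨m.m1 ≫ n.m1, m.m2 ≫ n.m2, by
    rw [Functor.map_comp, Functor.map_comp, Category.assoc, n.w, ← Category.assoc,
      m.w, Category.assoc]⟩
  id_comp m := by apply PBHom.ext <;> simp
  comp_id m := by apply PBHom.ext <;> simp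
  assoc m n o := by apply PBHom.ext <;> simp

/-- The first projection of the pullback. -/
def PB.proj₁ (f : A ⥤ B) (g : C ⥤ B) : PB f g ⥤ A where
  obj x := x.1.1
  map m := m.m1

/-- The second projection of the pullback. -/
def PB.proj₂ (f : A ⥤ B) (g : C ⥤ B) : PB f g ⥤ C where
  obj x := x.1.2
  map m := m.m2

end Pullback

/-!
The lens on `π₀` lifts `u : a ⟶ a'` at `(a, c)` to `(u, γ.put c (f u))`, so each lens law for it
is the corresponding law for `γ`, up to transporting `f u` along `f a = g c`. The lens on `π₁` is
the same construction with the factors of the pullback swapped. The universal property in `Cat`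
holds because `PB` is the strict pullback: a functor into it is exactly a pair of functors whose
composites with `f` and `g` agree.
-/

namespace CategoryTheory.Functor

variable {C : Type u₁} {D : Type u₂} [Category.{v₁} C] [Category.{v₂} D]

lemma map_heq_map_s14 (F : C ⥤ D) {X X' Y Y' : C} {f : X ⟶ Y} {f' : X' ⟶ Y'} (hX : X = X')
    (hY : Y = Y') (h : HEq f f') : HEq (F.map f) (F.map f') := by
  subst hX hY; rw [eq_of_heq h]

end CategoryTheory.Functor

namespace Lens

variable {A : Type u₁} {B : Type u₂} [Category.{v₁} A] [Category.{v₂} B] (l : Lens A B)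

lemma tgt_congr_s14 {a : A} {b b' : B} {u : l.get.obj a ⟶ b} {u' : l.get.obj a ⟶ b'} (hb : b = b')
    (h : HEq u u') : l.tgt a u = l.tgt a u' := by
  subst hb; rw [eq_of_heq h]

lemma put_congr_s14 {a : A} {b b' : B} {u : l.get.obj a ⟶ b} {u' : l.get.obj a ⟶ b'} (hb : b = b')
    (h : HEq u u') : HEq (l.put a u) (l.put a u') := by
  subst hb; rw [eq_of_heq h]

lemma tgt_eq_of_heq_id {a : A} {b : B} {u : l.get.obj a ⟶ b} (hb : b = l.get.obj a)
    (h : HEq u (𝟙 (l.get.obj a))) : l.tgt a u = a :=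
  (l.tgt_congr_s14 hb h).trans (l.tgt_id a)

lemma put_heq_id_of_heq_id {a : A} {b : B} {u : l.get.obj a ⟶ b} (hb : b = l.get.obj a)
    (h : HEq u (𝟙 (l.get.obj a))) : HEq (l.put a u) (𝟙 a) :=
  (l.put_congr_s14 hb h).trans (l.getput a)

lemma map_put {a : A} {b : B} (u : l.get.obj a ⟶ b) :
    l.get.map (l.put a u) = u ≫ eqToHom (l.obj_tgt a u).symm :=
  (conj_eqToHom_iff_heq' _ _ rfl (l.obj_tgt a u).symm).2 (l.putget a u) |>.trans (by simp)

end Lens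

section FakePullback

variable {A B C : Type u} [Category.{v} A] [Category.{v} B] [Category.{v} C] {f : A ⥤ B}
  {g : C ⥤ B}

lemma PB.ext {x y : PB f g} (h₁ : x.1.1 = y.1.1) (h₂ : x.1.2 = y.1.2) : x = y :=
  Subtype.ext (Prod.ext h₁ h₂)

lemma PBHom.hext {x x' y y' : PB f g} (hx : x = x') (hy : y = y') {m : x ⟶ y}
    {m' : x' ⟶ y'} (h₁ : HEq m.m1 m'.m1) (h₂ : HEq m.m2 m'.m2) : HEq m m' := by
  subst hx hy; exact heq_of_eq (PBHom.ext (eq_of_heq h₁) (eq_of_heq h₂))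

lemma PBHom.w_symm {x y : PB f g} (m : PBHom x y) :
    g.map m.m2 ≫ eqToHom y.2.symm = eqToHom x.2.symm ≫ f.map m.m1 := by
  rw [← cancel_epi (eqToHom x.2), ← Category.assoc, ← m.w]
  simp

variable (f g) in
lemma PB.comm : PB.proj₁ f g ⋙ f = PB.proj₂ f g ⋙ g := by
  refine CategoryTheory.Functor.ext (fun x => x.2) fun x y m => ?_
  simpa [PB.proj₁, PB.proj₂] using (comp_eqToHom_iff _ _ _).1 m.w

variable (f g) in
def PB.swap : PB f g ⥤ PB g f where
  obj x := ⟨(x.1.2, x.1.1), x.2.symm⟩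
  map m := ⟨m.m2, m.m1, m.w_symm⟩

def PB.transfer (x : PB f g) {a : A} (u : x.1.1 ⟶ a) : g.obj x.1.2 ⟶ f.obj a :=
  eqToHom x.2.symm ≫ f.map u

lemma PB.transfer_id_heq (x : PB f g) : HEq (x.transfer (𝟙 x.1.1)) (𝟙 (g.obj x.1.2)) := by
  simpa [PB.transfer] using eqToHom_heq_id_dom _ _ x.2.symm

lemma PB.transfer_comp (x : PB f g) {a a' : A} (u : x.1.1 ⟶ a) (v : a ⟶ a') :
    x.transfer (u ≫ v) = x.transfer u ≫ f.map v := by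
  simp [PB.transfer]

lemma Lens.tgt_transfer_comp (l : Lens C B) (x : PB f l.get) {a a' : A} (u : x.1.1 ⟶ a)
    (v : a ⟶ a') : l.tgt x.1.2 (x.transfer (u ≫ v)) =
      l.tgt (l.tgt x.1.2 (x.transfer u)) (eqToHom (l.obj_tgt _ _) ≫ f.map v) :=
  (l.tgt_congr_s14 rfl (heq_of_eq (x.transfer_comp u v))).trans
    (l.tgt_comp _ _ _ _ (eqToHom_comp_heq _ _))

lemma Lens.put_transfer_comp (l : Lens C B) (x : PB f l.get) {a a' : A} (u : x.1.1 ⟶ a)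
    (v : a ⟶ a') : HEq (l.put x.1.2 (x.transfer (u ≫ v)))
      (l.put x.1.2 (x.transfer u) ≫ l.put _ (eqToHom (l.obj_tgt _ _) ≫ f.map v)) :=
  (l.put_congr_s14 rfl (heq_of_eq (x.transfer_comp u v))).trans
    (l.putput _ _ _ _ (eqToHom_comp_heq _ _))

variable (f) in
def Lens.pullbackFst (l : Lens C B) : Lens (PB f l.get) A where
  get := PB.proj₁ f l.get
  tgt x {a} u := ⟨(a, l.tgt x.1.2 (x.transfer u)), (l.obj_tgt _ _).symm⟩
  put x {a} u := ⟨u, l.put x.1.2 (x.transfer u), by simp [l.map_put, PB.transfer]⟩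
  obj_tgt _ _ _ := rfl
  putget _ _ _ := HEq.rfl
  tgt_id x := PB.ext rfl (l.tgt_eq_of_heq_id x.2 x.transfer_id_heq)
  getput x := by
    refine PBHom.hext rfl ?_ ?_ ?_
    · exact PB.ext rfl <| l.tgt_eq_of_heq_id x.2 x.transfer_id_heq
    · exact HEq.rfl
    · exact l.put_heq_id_of_heq_id x.2 x.transfer_id_heq
  tgt_comp x _ _ u v v' hv := by
    obtain rfl : v' = v := eq_of_heq hv
    exact PB.ext rfl (l.tgt_transfer_comp x u v')
  putput x _ _ u v v' hv := by
    obtain rfl : v' = v := eq_of_heq hv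
    refine PBHom.hext rfl ?_ ?_ ?_
    · exact PB.ext rfl (l.tgt_transfer_comp x u v')
    · exact HEq.rfl
    · exact l.put_transfer_comp x u v'
-- `PB.swap` is a strict involution, so the laws of `pullbackFst g l` transfer along it.
variable (g) in
def Lens.pullbackSnd (l : Lens A B) : Lens (PB l.get g) C where
  get := PB.proj₂ l.get g
  tgt x _ u := (PB.swap g l.get).obj ((pullbackFst g l).tgt ((PB.swap l.get g).obj x) u)
  put x _ u := (PB.swap g l.get).map ((pullbackFst g l).put ((PB.swap l.get g).obj x) u)
  obj_tgt x _ u := (pullbackFst g l).obj_tgt ((PB.swap l.get g).obj x) u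
  putget x _ u := (pullbackFst g l).putget ((PB.swap l.get g).obj x) u
  tgt_id x := congrArg (PB.swap g l.get).obj ((pullbackFst g l).tgt_id _)
  getput x := by
    have getput := (pullbackFst g l).getput ((PB.swap l.get g).obj x)
    refine ((PB.swap g l.get).map_heq_map_s14 rfl ?_ getput).trans
      (heq_of_eq ((PB.swap g l.get).map_id _))
    exact (pullbackFst g l).tgt_id _
  tgt_comp x _ _ u v v' hv := congrArg (PB.swap g l.get).obj
    ((pullbackFst g l).tgt_comp ((PB.swap l.get g).obj x) u v v' hv)
  putput x _ _ u v v' hv := by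
    have putput := (pullbackFst g l).putput ((PB.swap l.get g).obj x) u v v' hv
    refine ((PB.swap g l.get).map_heq_map_s14 rfl ?_ putput).trans
      (heq_of_eq ((PB.swap g l.get).map_comp _ _))
    exact (pullbackFst g l).tgt_comp ((PB.swap l.get g).obj x) u v v' hv

section UniversalProperty

variable {Q : Type u₃} [Category.{v₃} Q]

def PB.lift (q₁ : Q ⥤ A) (q₂ : Q ⥤ C) (h : q₁ ⋙ f = q₂ ⋙ g) : Q ⥤ PB f g where
  obj q := ⟨(q₁.obj q, q₂.obj q), Functor.congr_obj h q⟩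
  map m := ⟨q₁.map m, q₂.map m, by
    rw [comp_eqToHom_iff]
    simpa using Functor.congr_hom h m⟩

lemma PB.functor_ext {F G : Q ⥤ PB f g} (h₁ : F ⋙ PB.proj₁ f g = G ⋙ PB.proj₁ f g)
    (h₂ : F ⋙ PB.proj₂ f g = G ⋙ PB.proj₂ f g) : F = G := by
  refine CategoryTheory.Functor.hext
    (fun q => PB.ext (Functor.congr_obj h₁ q) (Functor.congr_obj h₂ q)) fun q q' m => ?_
  refine PBHom.hext (PB.ext (Functor.congr_obj h₁ q) (Functor.congr_obj h₂ q))
    (PB.ext (Functor.congr_obj h₁ q') (Functor.congr_obj h₂ q')) ?_ ?_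
  · exact Functor.hcongr_hom h₁ m
  · exact Functor.hcongr_hom h₂ m

end UniversalProperty

end FakePullback

/-- The forgetful functor `Lens → Cat` (taking Gets) sends the fake pullback of a cospan
of lenses to a genuine pullback in `Cat`: the projections of the fake pullback underlie
lenses, the square of Get functors commutes, and it satisfies the universal property of
the pullback of `l1.get` and `l2.get` in `Cat`. -/
theorem fake_pullback_is_pullback_in_Cat {A B C : Type u} [Category.{v} A]
    [Category.{v} B] [Category.{v} C] (l1 : Lens A B) (l2 : Lens C B) :
    -- the projections of the fake pullback underlie lenses
    (∃ p0 : Lens (PB l1.get l2.get) A, p0.get = PB.proj₁ l1.get l2.get) ∧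
    (∃ p1 : Lens (PB l1.get l2.get) C, p1.get = PB.proj₂ l1.get l2.get) ∧
    -- the square of underlying functors commutes
    PB.proj₁ l1.get l2.get ⋙ l1.get = PB.proj₂ l1.get l2.get ⋙ l2.get ∧
    -- and is a genuine pullback square in Cat
    ∀ (Q : Type u) [Category.{v} Q] (q0 : Q ⥤ A) (q1 : Q ⥤ C),
      q0 ⋙ l1.get = q1 ⋙ l2.get →
      ∃! h : Q ⥤ PB l1.get l2.get,
        h ⋙ PB.proj₁ l1.get l2.get = q0 ∧ h ⋙ PB.proj₂ l1.get l2.get = q1 := by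
  refine ⟨⟨Lens.pullbackFst l1.get l2, rfl⟩, ⟨Lens.pullbackSnd l2.get l1, rfl⟩, PB.comm _ _, ?_⟩
  intro Q _ q0 q1 h
  exact ⟨PB.lift q0 q1 h, ⟨rfl, rfl⟩, fun F hF => PB.functor_ext hF.1 hF.2⟩
end

section
/- There is a functor M : SpnLens(A,B) → SymLens(A,B) sending a span of lenses, represented by a diagram Ω → A, Ω → X, Λ → B, Λ → X (with γ : Ω → X and φ : Λ → X identity-on-objects functors, and γ̄ : Ω → A, φ̄ : Λ → B discrete opfibrations, and X the apex with legs g : X → A, f : X → B satisfying g∘γ = γ̄ and f∘φ = φ̄), to the symmetric lens given by the pair of spans (γ̄, Ω, f∘γ) : A ⇸ B and (g∘φ, Λ, φ̄) : B ⇸ A; this assignment is well-defined (the two spans share the same discrete category of objects and the resulting data satisfies the symmetric lens conditions) and functorial on morphisms of spans of lenses. -/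
open CategoryTheory

universe w v u v₁ u₁ v₂ u₂ v₃ u₃

section SymSpn

variable {A B : Type u} [Category.{v} A] [Category.{v} B]

/-- A map of Mealy morphisms: a function on states commuting with the legs of the spans
and with the transition and output operations. -/
@[ext] structure MealyHom (m₁ m₂ : Mealy A B) where
  toFun : m₁.X₀ → m₂.X₀
  g_comm : ∀ x, m₂.g₀ (toFun x) = m₁.g₀ x
  f_comm : ∀ x, m₂.f₀ (toFun x) = m₁.f₀ x
  q_comm : ∀ (x : m₁.X₀) (a : A) (u : m₁.g₀ x ⟶ a)
    (u' : m₂.g₀ (toFun x) ⟶ a), HEq u' u →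
    toFun (m₁.q x u) = m₂.q (toFun x) u'
  f_map_comm : ∀ (x : m₁.X₀) (a : A) (u : m₁.g₀ x ⟶ a)
    (u' : m₂.g₀ (toFun x) ⟶ a), HEq u' u →
    HEq (m₁.f x u) (m₂.f (toFun x) u')

/-- The identity map of Mealy morphisms. -/
def MealyHom.id (m : Mealy A B) : MealyHom m m where
  toFun := _root_.id
  g_comm _ := rfl
  f_comm _ := rfl
  q_comm := by intro x a u u' h; cases eq_of_heq h; rfl
  f_map_comm := by intro x a u u' h; cases eq_of_heq h; rfl

/-- Composition of maps of Mealy morphisms. -/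
def MealyHom.comp {m₁ m₂ m₃ : Mealy A B} (j : MealyHom m₁ m₂) (k : MealyHom m₂ m₃) :
    MealyHom m₁ m₃ where
  toFun := k.toFun ∘ j.toFun
  g_comm x := (k.g_comm _).trans (j.g_comm x)
  f_comm x := (k.f_comm _).trans (j.f_comm x)
  q_comm := by
    intro x a u u' h
    obtain ⟨u'', h2⟩ : ∃ u'' : m₂.g₀ (j.toFun x) ⟶ a, HEq u'' u :=
      ⟨cast (by rw [j.g_comm x]) u, cast_heq _ _⟩
    show k.toFun (j.toFun (m₁.q x u)) = _
    rw [j.q_comm x a u u'' h2, k.q_comm (j.toFun x) a u'' u' (h.trans h2.symm)]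
    rfl
  f_map_comm := by
    intro x a u u' h
    obtain ⟨u'', h2⟩ : ∃ u'' : m₂.g₀ (j.toFun x) ⟶ a, HEq u'' u :=
      ⟨cast (by rw [j.g_comm x]) u, cast_heq _ _⟩
    exact (j.f_map_comm x a u u'' h2).trans
      (k.f_map_comm (j.toFun x) a u'' u' (h.trans h2.symm))

/-- A symmetric lens from `A` to `B`: a pair of Mealy morphisms `A ⇸ B` and `B ⇸ A`
sharing the same set of states (correspondences), whose underlying spans of functions
agree. -/
structure SymLensObj (A B : Type u) [Category.{v} A] [Category.{v} B] where
  mealyAB : Mealy A B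
  mealyBA : Mealy B A
  obj_eq : mealyBA.X₀ = mealyAB.X₀
  to_base : ∀ x, mealyBA.f₀ x = mealyAB.g₀ (cast obj_eq x)
  to_fiber : ∀ x, mealyBA.g₀ x = mealyAB.f₀ (cast obj_eq x)

/-- A morphism of symmetric lenses: a pair of maps of Mealy morphisms agreeing on
states. -/
@[ext] structure SymLensHom (S T : SymLensObj A B) where
  homP : MealyHom S.mealyAB T.mealyAB
  homM : MealyHom S.mealyBA T.mealyBA
  compat : ∀ x, cast T.obj_eq (homM.toFun x) = homP.toFun (cast S.obj_eq x)

/-- The category `SymLens(A, B)` of symmetric lenses from `A` to `B`. -/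
instance SymLensObj.category : Category.{u} (SymLensObj A B) where
  Hom := SymLensHom
  id S := ⟨MealyHom.id _, MealyHom.id _, fun _ => rfl⟩
  comp j k := ⟨j.homP.comp k.homP, j.homM.comp k.homM,
    fun x => (k.compat _).trans (congrArg k.homP.toFun (j.compat x))⟩
  id_comp f := by apply SymLensHom.ext <;> apply MealyHom.ext <;> rfl
  comp_id f := by apply SymLensHom.ext <;> apply MealyHom.ext <;> rfl
  assoc f g h := by apply SymLensHom.ext <;> apply MealyHom.ext <;> rfl

/-- A span of asymmetric lenses from `A` to `B`. -/
structure SpnLensObj (A B : Type u) [Category.{v} A] [Category.{v} B] where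
  X : Type u
  [instX : Category.{v} X]
  left : Lens X A
  right : Lens X B

attribute [instance] SpnLensObj.instX

/-- A morphism of spans of lenses: a functor between the apexes which is simultaneously
a morphism in `Lens(A)` between the left legs and a morphism in `Lens(B)` between the
right legs (i.e. commutes with the Gets and preserves the Puts). -/
@[ext] structure SpnLensHom (S T : SpnLensObj A B) where
  h : S.X ⥤ T.X
  left_comm : h ⋙ T.left.get = S.left.get
  right_comm : h ⋙ T.right.get = S.right.get
  left_tgt : ∀ (x : S.X) (a : A) (u : S.left.get.obj x ⟶ a)
    (u' : T.left.get.obj (h.obj x) ⟶ a), HEq u' u →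
    h.obj (S.left.tgt x u) = T.left.tgt (h.obj x) u'
  left_put : ∀ (x : S.X) (a : A) (u : S.left.get.obj x ⟶ a)
    (u' : T.left.get.obj (h.obj x) ⟶ a), HEq u' u →
    HEq (h.map (S.left.put x u)) (T.left.put (h.obj x) u')
  right_tgt : ∀ (x : S.X) (b : B) (u : S.right.get.obj x ⟶ b)
    (u' : T.right.get.obj (h.obj x) ⟶ b), HEq u' u →
    h.obj (S.right.tgt x u) = T.right.tgt (h.obj x) u'
  right_put : ∀ (x : S.X) (b : B) (u : S.right.get.obj x ⟶ b)
    (u' : T.right.get.obj (h.obj x) ⟶ b), HEq u' u →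
    HEq (h.map (S.right.put x u)) (T.right.put (h.obj x) u')


/-- A functor preserves heterogeneous equality of morphisms with equal codomains. -/
theorem map_heq_of_heq {C D : Type u₁} [Category.{v₁} C] [Category.{v₁} D] (F : C ⥤ D)
    {x y y' : C} (h : y = y') {f : x ⟶ y} {g : x ⟶ y'} (hf : HEq f g) :
    HEq (F.map f) (F.map g) := by subst h; rw [eq_of_heq hf]

/-- The category `SpnLens(A, B)` of spans of asymmetric lenses from `A` to `B`. -/
instance SpnLensObj.category : Category.{max u v} (SpnLensObj A B) where
  Hom := SpnLensHom
  id S := { h := 𝟭 S.X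
            left_comm := S.left.get.id_comp
            right_comm := S.right.get.id_comp
            left_tgt := by intro x a u u' h; cases eq_of_heq h; rfl
            left_put := by intro x a u u' h; cases eq_of_heq h; rfl
            right_tgt := by intro x b u u' h; cases eq_of_heq h; rfl
            right_put := by intro x b u u' h; cases eq_of_heq h; rfl }
  comp := fun {S T U} j k =>
    { h := j.h ⋙ k.h
      left_comm := by rw [Functor.assoc, k.left_comm, j.left_comm]
      right_comm := by rw [Functor.assoc, k.right_comm, j.right_comm]
      left_tgt := by
        intro x a u u' hu
        obtain ⟨u'', h2⟩ : ∃ u'' : T.left.get.obj (j.h.obj x) ⟶ a, HEq u'' u :=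
          ⟨cast (by rw [show T.left.get.obj (j.h.obj x) = S.left.get.obj x from
            congrArg (fun F => F.obj x) j.left_comm]) u, cast_heq _ _⟩
        show k.h.obj (j.h.obj (S.left.tgt x u)) = _
        rw [j.left_tgt x a u u'' h2,
          k.left_tgt (j.h.obj x) a u'' u' (hu.trans h2.symm)]
        rfl
      left_put := by
        intro x a u u' hu
        obtain ⟨u'', h2⟩ : ∃ u'' : T.left.get.obj (j.h.obj x) ⟶ a, HEq u'' u :=
          ⟨cast (by rw [show T.left.get.obj (j.h.obj x) = S.left.get.obj x from
            congrArg (fun F => F.obj x) j.left_comm]) u, cast_heq _ _⟩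
        exact (map_heq_of_heq k.h (j.left_tgt x a u u'' h2)
            (j.left_put x a u u'' h2)).trans
          (k.left_put (j.h.obj x) a u'' u' (hu.trans h2.symm))
      right_tgt := by
        intro x b u u' hu
        obtain ⟨u'', h2⟩ : ∃ u'' : T.right.get.obj (j.h.obj x) ⟶ b, HEq u'' u :=
          ⟨cast (by rw [show T.right.get.obj (j.h.obj x) = S.right.get.obj x from
            congrArg (fun F => F.obj x) j.right_comm]) u, cast_heq _ _⟩
        show k.h.obj (j.h.obj (S.right.tgt x u)) = _
        rw [j.right_tgt x b u u'' h2,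
          k.right_tgt (j.h.obj x) b u'' u' (hu.trans h2.symm)]
        rfl
      right_put := by
        intro x b u u' hu
        obtain ⟨u'', h2⟩ : ∃ u'' : T.right.get.obj (j.h.obj x) ⟶ b, HEq u'' u :=
          ⟨cast (by rw [show T.right.get.obj (j.h.obj x) = S.right.get.obj x from
            congrArg (fun F => F.obj x) j.right_comm]) u, cast_heq _ _⟩
        exact (map_heq_of_heq k.h (j.right_tgt x b u u'' h2)
            (j.right_put x b u u'' h2)).trans
          (k.right_put (j.h.obj x) b u'' u' (hu.trans h2.symm)) }
  id_comp f := by apply SpnLensHom.ext; exact Functor.id_comp f.h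
  comp_id f := by apply SpnLensHom.ext; exact Functor.comp_id f.h
  assoc f g h := by apply SpnLensHom.ext; exact Functor.assoc f.h g.h h.h

/-- `M : SpnLens(A,B) → SymLens(A,B)` sends a span of lenses to the symmetric lens whose
set of correspondences is the set of objects of the apex, whose Mealy morphism `A ⇸ B`
has transitions given by the Put of the left leg and outputs given by applying the Get
of the right leg to the lifts, and dually for `B ⇸ A`. -/
def MDescr (M : @Functor (SpnLensObj A B) SpnLensObj.category
    (SymLensObj A B) SymLensObj.category) : Prop :=
  ∀ S : SpnLensObj A B,
    ∃ hP : (M.obj S).mealyAB.X₀ = S.X, ∃ hM : (M.obj S).mealyBA.X₀ = S.X,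
      (∀ x, (M.obj S).mealyAB.g₀ x = S.left.get.obj (cast hP x)) ∧
      (∀ x, (M.obj S).mealyAB.f₀ x = S.right.get.obj (cast hP x)) ∧
      (∀ (x : (M.obj S).mealyAB.X₀) (a : A) (u : (M.obj S).mealyAB.g₀ x ⟶ a)
        (u' : S.left.get.obj (cast hP x) ⟶ a), HEq u' u →
        cast hP ((M.obj S).mealyAB.q x u) = S.left.tgt (cast hP x) u' ∧
        HEq ((M.obj S).mealyAB.f x u)
          (S.right.get.map (S.left.put (cast hP x) u'))) ∧
      (∀ x, (M.obj S).mealyBA.g₀ x = S.right.get.obj (cast hM x)) ∧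
      (∀ x, (M.obj S).mealyBA.f₀ x = S.left.get.obj (cast hM x)) ∧
      (∀ (x : (M.obj S).mealyBA.X₀) (b : B) (u : (M.obj S).mealyBA.g₀ x ⟶ b)
        (u' : S.right.get.obj (cast hM x) ⟶ b), HEq u' u →
        cast hM ((M.obj S).mealyBA.q x u) = S.right.tgt (cast hM x) u' ∧
        HEq ((M.obj S).mealyBA.f x u)
          (S.left.get.map (S.right.put (cast hM x) u')))

end SymSpn

section Construction

variable {A B : Type u} [Category.{v} A] [Category.{v} B]

/-- The Mealy morphism obtained from a pair of lenses sharing an apex. -/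
def mealyOfLenses {X A B : Type u} [Category.{v} X] [Category.{v} A] [Category.{v} B]
    (L : Lens X A) (R : Lens X B) : Mealy A B where
  X₀ := X
  g₀ := L.get.obj
  f₀ := R.get.obj
  q x _ u := L.tgt x u
  f x _ u := R.get.map (L.put x u)
  g_q x _ u := L.obj_tgt x u
  q_id := L.tgt_id
  f_id x := by
    refine (map_heq_of_heq R.get (L.tgt_id x) (L.getput x)).trans ?_
    rw [R.get.map_id]
  q_comp x _ _ u v v' hv := L.tgt_comp x u v v' hv
  f_comp x a a' u v v' hv := by
    refine (map_heq_of_heq R.get (L.tgt_comp x u v v' hv) (L.putput x u v v' hv)).trans ?_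
    rw [R.get.map_comp]

/-- The Mealy-morphism map induced by a morphism of spans of lenses (forward case). -/
def mealyHomOfP {S T : SpnLensObj A B} (j : S ⟶ T) :
    MealyHom (mealyOfLenses S.left S.right) (mealyOfLenses T.left T.right) where
  toFun := j.h.obj
  g_comm x := congrArg (fun F => F.obj x) j.left_comm
  f_comm x := congrArg (fun F => F.obj x) j.right_comm
  q_comm x a u u' h := j.left_tgt x a u u' h
  f_map_comm x a u u' h := by
    show HEq (S.right.get.map (S.left.put x u))
      (T.right.get.map (T.left.put (j.h.obj x) u'))
    rw [← j.right_comm]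
    exact map_heq_of_heq T.right.get (j.left_tgt x a u u' h) (j.left_put x a u u' h)

/-- The Mealy-morphism map induced by a morphism of spans of lenses (backward case). -/
def mealyHomOfM {S T : SpnLensObj A B} (j : S ⟶ T) :
    MealyHom (mealyOfLenses S.right S.left) (mealyOfLenses T.right T.left) where
  toFun := j.h.obj
  g_comm x := congrArg (fun F => F.obj x) j.right_comm
  f_comm x := congrArg (fun F => F.obj x) j.left_comm
  q_comm x b u u' h := j.right_tgt x b u u' h
  f_map_comm x b u u' h := by
    show HEq (S.left.get.map (S.right.put x u))
      (T.left.get.map (T.right.put (j.h.obj x) u'))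
    rw [← j.left_comm]
    exact map_heq_of_heq T.left.get (j.right_tgt x b u u' h) (j.right_put x b u u' h)

end Construction

/-- There is a functor `M : SpnLens(A,B) → SymLens(A,B)` sending a span of asymmetric
lenses to its underlying symmetric lens: the correspondences are the objects of the apex
of the span, the Mealy morphism `A ⇸ B` propagates updates using the Put of the left leg
followed by the Get of the right leg, and dually for `B ⇸ A`. -/
theorem spnLens_to_symLens_functor {A B : Type u} [Category.{v} A] [Category.{v} B] :
    ∃ M : SpnLensObj A B ⥤ SymLensObj A B, MDescr M := by
  refine ⟨{ obj := fun S => ⟨mealyOfLenses S.left S.right, mealyOfLenses S.right S.left,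
              rfl, fun _ => rfl, fun _ => rfl⟩
            map := fun j => ⟨mealyHomOfP j, mealyHomOfM j, fun _ => rfl⟩
            map_id := by
              intro S
              apply SymLensHom.ext <;> apply MealyHom.ext <;> rfl
            map_comp := by
              intro S T U j k
              apply SymLensHom.ext <;> apply MealyHom.ext <;> rfl }, ?_⟩
  intro S
  refine ⟨rfl, rfl, fun _ => rfl, fun _ => rfl, ?_, fun _ => rfl, fun _ => rfl, ?_⟩
  · intro x a u u' h
    cases eq_of_heq h
    exact ⟨rfl, HEq.rfl⟩
  · intro x b u u' h
    cases eq_of_heq h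
    exact ⟨rfl, HEq.rfl⟩
end

section
/- For small categories A and B there is an adjunction M ⊣ R between the category of spans of asymmetric lenses SpnLens(A,B) and the category of symmetric lenses SymLens(A,B), where R sends a symmetric lens (X⁺, X⁻ over X₀) to the span of lenses with apex the image X̃ of the jointly-fully-faithful factorization of ⟨g₀, f₀⟩ : X₀ → A × B, and M R = 1; thus SymLens(A,B) is a reflective subcategory of SpnLens(A,B). -/
open CategoryTheory

universe w v u v₁ u₁ v₂ u₂ v₃ u₃

/-- Description of the functor `SymLens(A,B) → SpnLens(A,B)` built from the bo-ff
factorisation of `⟨g₀, f₀⟩ : X₀ → A × B`: the apex `X̃` has the correspondences as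
objects, its two Get functors act as `g₀` and `f₀` on objects and are jointly fully
faithful (`X̃` is the image of `⟨g₀, f₀⟩`), the Put of the left leg is the
identity-on-objects functor `σ : X⁺ → X̃`, and the Put of the right leg is
`τ : X⁻ → X̃`. -/
def ImageSpanDescr {A B : Type u} [Category.{v} A] [Category.{v} B]
    (R : SymLensObj A B ⥤ SpnLensObj A B) : Prop :=
  ∀ S : SymLensObj A B,
    ∃ h : (R.obj S).X = S.mealyAB.X₀,
      (∀ x, (R.obj S).left.get.obj x = S.mealyAB.g₀ (cast h x)) ∧
      (∀ x, (R.obj S).right.get.obj x = S.mealyAB.f₀ (cast h x)) ∧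
      (∀ (x y : (R.obj S).X) (u : (R.obj S).left.get.obj x ⟶ (R.obj S).left.get.obj y)
        (v : (R.obj S).right.get.obj x ⟶ (R.obj S).right.get.obj y),
        ∃! w : x ⟶ y, (R.obj S).left.get.map w = u ∧ (R.obj S).right.get.map w = v) ∧
      (∀ (x : (R.obj S).X) (a : A) (u : (R.obj S).left.get.obj x ⟶ a)
        (u' : S.mealyAB.g₀ (cast h x) ⟶ a), HEq u' u →
        cast h ((R.obj S).left.tgt x u) = S.mealyAB.q (cast h x) u' ∧
        HEq ((R.obj S).right.get.map ((R.obj S).left.put x u))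
          (S.mealyAB.f (cast h x) u')) ∧
      (∀ (x : (R.obj S).X) (b : B) (u : (R.obj S).right.get.obj x ⟶ b)
        (u' : S.mealyBA.g₀ (cast (h.trans S.obj_eq.symm) x) ⟶ b), HEq u' u →
        cast h ((R.obj S).right.tgt x u) =
          cast S.obj_eq (S.mealyBA.q (cast (h.trans S.obj_eq.symm) x) u') ∧
        HEq ((R.obj S).left.get.map ((R.obj S).right.put x u))
          (S.mealyBA.f (cast (h.trans S.obj_eq.symm) x) u'))

/-!
The apex `X̃` of `R S` is the bo-ff image of `⟨g₀, f₀⟩`, so a functor into it is a map on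
objects together with functors to `A` and `B` compatible with `g₀` and `f₀`. Reading a Mealy
morphism `m : A ⇸ B` as the lens `X̃ ⇄ A` whose Put is built from the transitions and outputs
of `m`, a map of Mealy morphisms `l.toMealy F ⟶ m` becomes a morphism of lenses from `l` into
that lens, over the induced functor into `X̃`. Applied to both legs of a span `S` this gives the
hom-equivalence `(M S ⟶ T) ≃ (S ⟶ R T)`. Finally `M (R T)` has `T.mealyAB` as its first
Mealy morphism and, as its second, `T.mealyBA` re-indexed along `X₀⁻ = X₀⁺`, which equals
`T.mealyBA`; hence `R ⋙ M = 𝟭`, the counit is invertible and `R` is fully faithful.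
-/

namespace Mealy

section Congr

variable {A : Type u₁} {B : Type u₂} [Category.{v₁} A] [Category.{v₂} B]

theorem q_congr (m : Mealy A B) {x x' : m.X₀} (hx : x = x') {a a' : A} (ha : a = a')
    {u : m.g₀ x ⟶ a} {u' : m.g₀ x' ⟶ a'} (hu : u ≍ u') : m.q x u = m.q x' u' := by
  subst hx ha; cases hu; rfl

theorem f_congr (m : Mealy A B) {x x' : m.X₀} (hx : x = x') {a a' : A} (ha : a = a')
    {u : m.g₀ x ⟶ a} {u' : m.g₀ x' ⟶ a'} (hu : u ≍ u') : m.f x u ≍ m.f x' u' := by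
  subst hx ha; cases hu; rfl

end Congr

variable {A B : Type u} [Category.{v} A] [Category.{v} B]

theorem eq_of_mealyHom {m₁ m₂ : Mealy A B} (k : MealyHom m₁ m₂) (h : m₁.X₀ = m₂.X₀)
    (hk : ∀ x, k.toFun x = cast h x) : m₁ = m₂ := by
  obtain ⟨X₁, g₁, f₁, q₁, fm₁, _, _, _, _, _⟩ := m₁
  obtain ⟨X₂, g₂, f₂, q₂, fm₂, _, _, _, _, _⟩ := m₂
  obtain ⟨o, hg, hf, hq, hfm⟩ := k
  dsimp only at h hk hg hf hq hfm
  subst h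
  obtain rfl : o = id := funext hk
  obtain rfl : g₂ = g₁ := funext hg
  obtain rfl : f₂ = f₁ := funext hf
  obtain rfl : @q₂ = @q₁ := funext fun x => funext fun a => funext fun u =>
    (hq x a u u HEq.rfl).symm
  obtain rfl : @fm₂ = @fm₁ := funext fun x => funext fun a => funext fun u =>
    (eq_of_heq (hfm x a u u HEq.rfl)).symm
  rfl

def castStates (m : Mealy A B) {Y : Type u} (e : m.X₀ = Y) (g₀ : Y → A) (f₀ : Y → B)
    (hg : ∀ x, m.g₀ x = g₀ (cast e x)) (hf : ∀ x, m.f₀ x = f₀ (cast e x)) : Mealy A B where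
  X₀ := Y
  g₀ := g₀
  f₀ := f₀
  q y _ u := cast e (m.q (cast e.symm y) (eqToHom (by simp [hg]) ≫ u))
  f y _ u := eqToHom (by simp [hf]) ≫ m.f (cast e.symm y) (eqToHom (by simp [hg]) ≫ u) ≫
    eqToHom (hf _)
  g_q y _ u := by subst e; exact (hg _).symm.trans (m.g_q _ _)
  q_id y := by
    subst e
    exact (m.q_congr rfl (hg y).symm
      ((eqToHom_comp_heq _ _).trans (congr_arg_heq (fun a => 𝟙 a) (hg y).symm))).trans
      (m.q_id y)
  f_id y := by
    subst e
    refine (eqToHom_comp_heq _ _).trans ((comp_eqToHom_heq _ _).trans ?_)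
    exact (m.f_congr rfl (hg y).symm
      ((eqToHom_comp_heq _ _).trans (congr_arg_heq (fun a => 𝟙 a) (hg y).symm))).trans
      ((m.f_id y).trans (congr_arg_heq (fun b => 𝟙 b) (hf y)))
  q_comp y _ _ u v v' hv := by
    subst e
    exact (congrArg (m.q y) (Category.assoc _ _ _).symm).trans
      (m.q_comp y _ v _ ((eqToHom_comp_heq _ _).trans hv))
  f_comp y _ _ u v v' hv := by
    subst e
    obtain rfl : f₀ = m.f₀ := funext fun x => (hf x).symm
    simp only [eqToHom_refl, Category.id_comp, Category.comp_id]
    exact (m.f_congr rfl rfl (heq_of_eq (Category.assoc _ _ _).symm)).trans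
      (m.f_comp y _ v _ ((eqToHom_comp_heq _ _).trans hv))

section CastStates

variable (m : Mealy A B) {Y : Type u} (e : m.X₀ = Y) {g₀ : Y → A} {f₀ : Y → B}
  (hg : ∀ x, m.g₀ x = g₀ (cast e x)) (hf : ∀ x, m.f₀ x = f₀ (cast e x))

def toCastStates : MealyHom m (m.castStates e g₀ f₀ hg hf) where
  toFun := cast e
  g_comm x := (hg x).symm
  f_comm x := (hf x).symm
  q_comm x _ u u' hu := by
    subst e
    exact m.q_congr rfl rfl ((eqToHom_comp_heq _ _).trans hu).symm
  f_map_comm x _ u u' hu := by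
    subst e
    refine HEq.symm ((eqToHom_comp_heq _ _).trans ((comp_eqToHom_heq _ _).trans ?_))
    exact m.f_congr rfl rfl ((eqToHom_comp_heq _ _).trans hu)

def ofCastStates : MealyHom (m.castStates e g₀ f₀ hg hf) m where
  toFun := cast e.symm
  g_comm y := by subst e; exact hg y
  f_comm y := by subst e; exact hf y
  q_comm y _ u u' hu := by
    subst e
    exact m.q_congr rfl rfl ((eqToHom_comp_heq _ _).trans hu.symm)
  f_map_comm y _ u u' hu := by
    subst e
    refine (eqToHom_comp_heq _ _).trans ((comp_eqToHom_heq _ _).trans ?_)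
    exact m.f_congr rfl rfl ((eqToHom_comp_heq _ _).trans hu.symm)

theorem castStates_eq : m.castStates e g₀ f₀ hg hf = m :=
  eq_of_mealyHom (m.ofCastStates e hg hf) e.symm fun _ => rfl

end CastStates

end Mealy

namespace MealyHom

variable {A B : Type u} [Category.{v} A] [Category.{v} B]

def copy {m₁ m₂ : Mealy A B} (k : MealyHom m₁ m₂) (o : m₁.X₀ → m₂.X₀) (h : o = k.toFun) :
    MealyHom m₁ m₂ where
  toFun := o
  g_comm := h ▸ k.g_comm
  f_comm := h ▸ k.f_comm
  q_comm := h ▸ k.q_comm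
  f_map_comm := h ▸ k.f_map_comm

end MealyHom

namespace Lens

variable {X Y C D : Type u} [Category.{v} X] [Category.{v} Y] [Category.{v} C] [Category.{v} D]

/-- The morphisms `l ⟶ l'` of `Lens(C)`. -/
structure IsHom (h : X ⥤ Y) (l : Lens X C) (l' : Lens Y C) : Prop where
  get_comm : h ⋙ l'.get = l.get
  tgt_comm : ∀ (x : X) (c : C) (u : l.get.obj x ⟶ c) (u' : l'.get.obj (h.obj x) ⟶ c),
    u' ≍ u → h.obj (l.tgt x u) = l'.tgt (h.obj x) u'
  put_comm : ∀ (x : X) (c : C) (u : l.get.obj x ⟶ c) (u' : l'.get.obj (h.obj x) ⟶ c),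
    u' ≍ u → h.map (l.put x u) ≍ l'.put (h.obj x) u'

def toMealy (l : Lens X C) (F : X ⥤ D) : Mealy C D where
  X₀ := X
  g₀ := l.get.obj
  f₀ := F.obj
  q x _ u := l.tgt x u
  f x _ u := F.map (l.put x u)
  g_q x _ u := l.obj_tgt x u
  q_id := l.tgt_id
  f_id x := (map_heq_of_heq F (l.tgt_id x) (l.getput x)).trans (heq_of_eq (F.map_id x))
  q_comp x _ _ u v v' hv := l.tgt_comp x u v v' hv
  f_comp x _ _ u v v' hv :=
    (map_heq_of_heq F (l.tgt_comp x u v v' hv) (l.putput x u v v' hv)).trans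
      (heq_of_eq (F.map_comp _ _))

def IsHom.toMealyHom {h : X ⥤ Y} {l : Lens X C} {l' : Lens Y C} (hl : IsHom h l l')
    {F : X ⥤ D} {F' : Y ⥤ D} (hF : h ⋙ F' = F) : MealyHom (l.toMealy F) (l'.toMealy F') where
  toFun := h.obj
  g_comm := Functor.congr_obj hl.get_comm
  f_comm := Functor.congr_obj hF
  q_comm := hl.tgt_comm
  f_map_comm x c u u' hu :=
    (Functor.hcongr_hom hF.symm (l.put x u)).trans
      (map_heq_of_heq F' (hl.tgt_comm x c u u' hu) (hl.put_comm x c u u' hu))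

end Lens

section SpanToSymLens

variable {A B : Type u} [Category.{v} A] [Category.{v} B]

namespace SpnLensHom

variable {S T : SpnLensObj A B}

theorem isHom_left (j : S ⟶ T) : Lens.IsHom j.h S.left T.left :=
  ⟨j.left_comm, j.left_tgt, j.left_put⟩

theorem isHom_right (j : S ⟶ T) : Lens.IsHom j.h S.right T.right :=
  ⟨j.right_comm, j.right_tgt, j.right_put⟩

def ofIsHom (h : S.X ⥤ T.X) (hl : Lens.IsHom h S.left T.left)
    (hr : Lens.IsHom h S.right T.right) : S ⟶ T :=
  ⟨h, hl.get_comm, hr.get_comm, hl.tgt_comm, hl.put_comm, hr.tgt_comm, hr.put_comm⟩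

end SpnLensHom

def SpnLensObj.toSymLens (S : SpnLensObj A B) : SymLensObj A B where
  mealyAB := S.left.toMealy S.right.get
  mealyBA := S.right.toMealy S.left.get
  obj_eq := rfl
  to_base _ := rfl
  to_fiber _ := rfl

/-- The functor `M`. -/
def spanToSymLens : SpnLensObj A B ⥤ SymLensObj A B where
  obj := SpnLensObj.toSymLens
  map j := ⟨j.isHom_left.toMealyHom j.right_comm, j.isHom_right.toMealyHom j.left_comm,
    fun _ => rfl⟩

theorem mDescr_spanToSymLens : MDescr (spanToSymLens (A := A) (B := B)) := by
  intro S
  refine ⟨rfl, rfl, fun _ => rfl, fun _ => rfl, ?_, fun _ => rfl, fun _ => rfl, ?_⟩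
  all_goals
    intro x _ u u' hu
    cases eq_of_heq hu
    exact ⟨rfl, HEq.rfl⟩

end SpanToSymLens

section JointImage

variable {A B X : Type u} [Category.{v} A] [Category.{v} B] [Category.{v} X] {X₀ : Type u}

/-- The bo-ff image `X̃` of `⟨p, r⟩ : X₀ → A × B`. -/
abbrev JointImage (p : X₀ → A) (r : X₀ → B) : Type u :=
  InducedCategory (A × B) (fun x => (p x, r x))

namespace JointImage

variable {p : X₀ → A} {r : X₀ → B}

def fst : JointImage p r ⥤ A := inducedFunctor _ ⋙ CategoryTheory.Prod.fst A B

def snd : JointImage p r ⥤ B := inducedFunctor _ ⋙ CategoryTheory.Prod.snd A B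

theorem hom_heq {x x' y y' : JointImage p r} (hx : x = x') (hy : y = y') {f : x ⟶ y}
    {g : x' ⟶ y'} (h₁ : f.hom.1 ≍ g.hom.1) (h₂ : f.hom.2 ≍ g.hom.2) : f ≍ g := by
  subst hx hy
  exact heq_of_eq (InducedCategory.hom_ext (Prod.ext (eq_of_heq h₁) (eq_of_heq h₂)))

theorem existsUnique_hom {x y : JointImage p r} (u : fst.obj x ⟶ fst.obj y)
    (v : snd.obj x ⟶ snd.obj y) : ∃! w : x ⟶ y, fst.map w = u ∧ snd.map w = v :=
  ⟨InducedCategory.homMk (u, v), ⟨rfl, rfl⟩,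
    fun _ hw => InducedCategory.hom_ext (Prod.ext hw.1 hw.2)⟩

def lift (o : X → X₀) (G : X ⥤ A) (H : X ⥤ B) (hG : ∀ x, p (o x) = G.obj x)
    (hH : ∀ x, r (o x) = H.obj x) : X ⥤ JointImage p r where
  obj := o
  map {x y} f := InducedCategory.homMk
    (eqToHom (hG x) ≫ G.map f ≫ eqToHom (hG y).symm,
      eqToHom (hH x) ≫ H.map f ≫ eqToHom (hH y).symm)
  map_id _ := by ext <;> simp
  map_comp _ _ := by ext <;> simp

variable {o : X → X₀} {G : X ⥤ A} {H : X ⥤ B} {hG : ∀ x, p (o x) = G.obj x}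
  {hH : ∀ x, r (o x) = H.obj x}

theorem lift_comp_fst : lift o G H hG hH ⋙ fst = G :=
  CategoryTheory.Functor.ext hG fun _ _ _ => rfl

theorem lift_comp_snd : lift o G H hG hH ⋙ snd = H :=
  CategoryTheory.Functor.ext hH fun _ _ _ => rfl

theorem lift_eq (K : X ⥤ JointImage p r) (hKG : K ⋙ fst = G) (hKH : K ⋙ snd = H) :
    lift K.obj G H (Functor.congr_obj hKG) (Functor.congr_obj hKH) = K := by
  subst hKG hKH
  exact Functor.hext (fun _ => rfl) fun _ _ _ => hom_heq rfl rfl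
    ((eqToHom_comp_heq _ _).trans (comp_eqToHom_heq _ _))
    ((eqToHom_comp_heq _ _).trans (comp_eqToHom_heq _ _))

end JointImage

end JointImage

namespace Mealy

variable {A B : Type u} [Category.{v} A] [Category.{v} B]

open JointImage

/-- The left leg of `R`: its Put is the identity-on-objects functor `σ : X⁺ → X̃`. -/
def lensFst (m : Mealy A B) : Lens (JointImage m.g₀ m.f₀) A where
  get := fst
  tgt x _ u := m.q x u
  put _ _ u := InducedCategory.homMk (u ≫ eqToHom (m.g_q _ u).symm, m.f _ u)
  obj_tgt := m.g_q
  putget _ _ u := comp_eqToHom_heq u _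
  tgt_id := m.q_id
  getput x := hom_heq rfl (m.q_id x) (comp_eqToHom_heq _ _) (m.f_id x)
  tgt_comp := m.q_comp
  putput x _ _ u v v' hv := hom_heq rfl (m.q_comp x u v v' hv)
    ((comp_eqToHom_heq _ _).trans (heq_comp rfl (m.g_q x u) (m.g_q _ v')
      (comp_eqToHom_heq _ _) ((comp_eqToHom_heq _ _).trans hv)).symm)
    (m.f_comp x u v v' hv)

/-- The right leg of `R`: its Put is the identity-on-objects functor `τ : X⁻ → X̃`. -/
def lensSnd (m : Mealy B A) : Lens (JointImage m.f₀ m.g₀) B where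
  get := snd
  tgt x _ u := m.q x u
  put _ _ u := InducedCategory.homMk (m.f _ u, u ≫ eqToHom (m.g_q _ u).symm)
  obj_tgt := m.g_q
  putget _ _ u := comp_eqToHom_heq u _
  tgt_id := m.q_id
  getput x := hom_heq rfl (m.q_id x) (m.f_id x) (comp_eqToHom_heq _ _)
  tgt_comp := m.q_comp
  putput x _ _ u v v' hv := hom_heq rfl (m.q_comp x u v v' hv)
    (m.f_comp x u v v' hv)
    ((comp_eqToHom_heq _ _).trans (heq_comp rfl (m.g_q x u) (m.g_q _ v')
      (comp_eqToHom_heq _ _) ((comp_eqToHom_heq _ _).trans hv)).symm)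

end Mealy

namespace MealyHom

variable {A B X : Type u} [Category.{v} A] [Category.{v} B] [Category.{v} X]

theorem isHom_lensFst {l : Lens X A} {F : X ⥤ B} {m : Mealy A B}
    (k : MealyHom (l.toMealy F) m) :
    Lens.IsHom (JointImage.lift (X := X) k.toFun l.get F k.g_comm k.f_comm) l m.lensFst where
  get_comm := JointImage.lift_comp_fst
  tgt_comm := k.q_comm
  put_comm x a u u' hu := JointImage.hom_heq rfl (k.q_comm x a u u' hu)
    (((eqToHom_comp_heq _ _).trans (comp_eqToHom_heq _ _)).trans
      ((l.putget x u).trans (hu.symm.trans (comp_eqToHom_heq _ _).symm)))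
    (((eqToHom_comp_heq _ _).trans (comp_eqToHom_heq _ _)).trans (k.f_map_comm x a u u' hu))

theorem isHom_lensSnd {l : Lens X B} {F : X ⥤ A} {m : Mealy B A}
    (k : MealyHom (l.toMealy F) m) :
    Lens.IsHom (JointImage.lift (X := X) k.toFun F l.get k.f_comm k.g_comm) l m.lensSnd where
  get_comm := JointImage.lift_comp_snd
  tgt_comm := k.q_comm
  put_comm x b u u' hu := JointImage.hom_heq rfl (k.q_comm x b u u' hu)
    (((eqToHom_comp_heq _ _).trans (comp_eqToHom_heq _ _)).trans (k.f_map_comm x b u u' hu))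
    (((eqToHom_comp_heq _ _).trans (comp_eqToHom_heq _ _)).trans
      ((l.putget x u).trans (hu.symm.trans (comp_eqToHom_heq _ _).symm)))

end MealyHom

section SymLensToSpan

variable {A B : Type u} [Category.{v} A] [Category.{v} B]

namespace SymLensObj

theorem ext_mealy {S T : SymLensObj A B} (hAB : S.mealyAB = T.mealyAB)
    (hBA : S.mealyBA = T.mealyBA) : S = T := by
  obtain ⟨_, _, _, _, _⟩ := S
  obtain ⟨_, _, _, _, _⟩ := T
  dsimp only at hAB hBA
  subst hAB hBA
  rfl

/-- `S.mealyBA` re-indexed along `S.obj_eq`, so that both Mealy morphisms of `S` share the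
states, and the legs, of `S.mealyAB`. -/
def backward (S : SymLensObj A B) : Mealy B A :=
  S.mealyBA.castStates S.obj_eq S.mealyAB.f₀ S.mealyAB.g₀ S.to_fiber S.to_base

def toSpan (S : SymLensObj A B) : SpnLensObj A B where
  X := JointImage S.mealyAB.g₀ S.mealyAB.f₀
  left := S.mealyAB.lensFst
  right := S.backward.lensSnd

def counit (S : SymLensObj A B) : spanToSymLens.obj S.toSpan ⟶ S :=
  ⟨MealyHom.id S.mealyAB, S.mealyBA.ofCastStates S.obj_eq S.to_fiber S.to_base,
    fun _ => (cast_cast _ _ _).trans (cast_eq _ _)⟩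

def counitIso (S : SymLensObj A B) : spanToSymLens.obj S.toSpan ≅ S where
  hom := S.counit
  inv := ⟨MealyHom.id S.mealyAB, S.mealyBA.toCastStates S.obj_eq S.to_fiber S.to_base,
    fun _ => cast_eq _ _⟩
  hom_inv_id := SymLensHom.ext rfl (MealyHom.ext (funext fun _ =>
    (cast_cast _ _ _).trans (cast_eq _ _)))
  inv_hom_id := SymLensHom.ext rfl (MealyHom.ext (funext fun _ =>
    (cast_cast _ _ _).trans (cast_eq _ _)))

end SymLensObj

namespace SymLensHom

variable {S T : SymLensObj A B}

/-- The function on states is taken from `φ.homP`, so that below both legs of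
`homToSpan φ` are lens morphisms over one and the same functor. -/
def toBackward (φ : S ⟶ T) : MealyHom S.mealyBA T.backward :=
  (φ.homM.comp (T.mealyBA.toCastStates T.obj_eq T.to_fiber T.to_base)).copy
    (φ.homP.toFun ∘ cast S.obj_eq) (funext fun y => (φ.compat y).symm)

theorem heq_of_toFun_heq {S' T' : SymLensObj A B} (hS : S = S') (hT : T = T')
    {f : S ⟶ T} {g : S' ⟶ T'} (hP : f.homP.toFun ≍ g.homP.toFun)
    (hM : f.homM.toFun ≍ g.homM.toFun) : f ≍ g := by
  subst hS hT
  exact heq_of_eq (SymLensHom.ext (MealyHom.ext (eq_of_heq hP)) (MealyHom.ext (eq_of_heq hM)))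

end SymLensHom

namespace SpnLensObj

variable {S' S : SpnLensObj A B} {T : SymLensObj A B}

def homToSpan (φ : spanToSymLens.obj S ⟶ T) : S ⟶ T.toSpan :=
  SpnLensHom.ofIsHom (JointImage.lift φ.homP.toFun S.left.get S.right.get φ.homP.g_comm
    φ.homP.f_comm) φ.homP.isHom_lensFst φ.toBackward.isHom_lensSnd

theorem homToSpan_map_comp (f : S' ⟶ S) (g : spanToSymLens.obj S ⟶ T) :
    homToSpan (spanToSymLens.map f ≫ g) = f ≫ homToSpan g :=
  SpnLensHom.ext (JointImage.lift_eq (f.h ⋙ (homToSpan g).h)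
    ((Functor.assoc _ _ _).trans
      ((congrArg (f.h ⋙ ·) (homToSpan g).left_comm).trans f.left_comm))
    ((Functor.assoc _ _ _).trans
      ((congrArg (f.h ⋙ ·) (homToSpan g).right_comm).trans f.right_comm)))

end SpnLensObj

def spanToSymLensHomEquiv (S : SpnLensObj A B) (T : SymLensObj A B) :
    (spanToSymLens.obj S ⟶ T) ≃ (S ⟶ T.toSpan) where
  toFun := SpnLensObj.homToSpan
  invFun ψ := spanToSymLens.map ψ ≫ T.counit
  left_inv φ := SymLensHom.ext rfl (MealyHom.ext (funext fun x =>
    (congrArg (cast T.obj_eq.symm) (φ.compat x)).symm.trans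
      ((cast_cast _ _ _).trans (cast_eq _ _))))
  right_inv ψ := SpnLensHom.ext (JointImage.lift_eq ψ.h ψ.left_comm ψ.right_comm)

/-- The functor `R`. -/
def symLensToSpan : SymLensObj A B ⥤ SpnLensObj A B :=
  Adjunction.rightAdjointOfEquiv spanToSymLensHomEquiv fun _ _ _ =>
    SpnLensObj.homToSpan_map_comp

def spanToSymLensAdj : spanToSymLens (A := A) (B := B) ⊣ symLensToSpan :=
  Adjunction.adjunctionOfEquivRight _ _

instance isIso_spanToSymLensAdj_counit : IsIso (spanToSymLensAdj (A := A) (B := B)).counit := by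
  have (S : SymLensObj A B) : IsIso (spanToSymLensAdj.counit.app S) := by
    show IsIso (spanToSymLens.map (𝟙 _) ≫ S.counit)
    rw [CategoryTheory.Functor.map_id, Category.id_comp]
    exact S.counitIso.isIso_hom
  exact NatIso.isIso_of_isIso_app _

theorem spanToSymLens_obj_toSpan (S : SymLensObj A B) : spanToSymLens.obj S.toSpan = S :=
  SymLensObj.ext_mealy rfl (Mealy.castStates_eq _ S.obj_eq S.to_fiber S.to_base)

theorem symLensToSpan_comp_spanToSymLens :
    symLensToSpan ⋙ spanToSymLens = 𝟭 (SymLensObj A B) := by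
  refine Functor.hext spanToSymLens_obj_toSpan fun S T j => ?_
  refine SymLensHom.heq_of_toFun_heq (spanToSymLens_obj_toSpan S) (spanToSymLens_obj_toSpan T)
    HEq.rfl (Function.hfunext S.obj_eq.symm fun x y hxy => ?_)
  obtain rfl : x = cast S.obj_eq y := eq_of_heq (hxy.trans (cast_heq _ _).symm)
  exact (heq_of_eq (j.compat y).symm).trans (cast_heq _ _)

theorem imageSpanDescr_symLensToSpan : ImageSpanDescr (symLensToSpan (A := A) (B := B)) := by
  intro S
  refine ⟨rfl, fun _ => rfl, fun _ => rfl, fun _ _ => JointImage.existsUnique_hom, ?_, ?_⟩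
  · intro x a u u' hu
    cases eq_of_heq hu
    exact ⟨rfl, HEq.rfl⟩
  · intro x b u u' hu
    exact ⟨congrArg (cast S.obj_eq)
        (S.mealyBA.q_congr rfl rfl ((eqToHom_comp_heq _ _).trans hu.symm)),
      (eqToHom_comp_heq _ _).trans ((comp_eqToHom_heq _ _).trans
        (S.mealyBA.f_congr rfl rfl ((eqToHom_comp_heq _ _).trans hu.symm)))⟩

end SymLensToSpan

/-- For small categories `A` and `B` there is an adjunction `M ⊣ R` between the category
of spans of asymmetric lenses and the category of symmetric lenses, where `M` takes the
underlying symmetric lens of a span and `R` is built from the bo-ff factorisation of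
`⟨g₀, f₀⟩ : X₀ → A × B` (so that the legs of `R S` are jointly fully faithful), with
`M R = 1`; in particular `R` is fully faithful and `SymLens(A,B)` is a reflective
subcategory of `SpnLens(A,B)`. -/
theorem symLens_reflective {A B : Type u} [Category.{v} A] [Category.{v} B] :
    ∃ (M : SpnLensObj A B ⥤ SymLensObj A B) (R : SymLensObj A B ⥤ SpnLensObj A B)
      (_ : M ⊣ R),
      MDescr M ∧ ImageSpanDescr R ∧ R ⋙ M = 𝟭 (SymLensObj A B) ∧
      R.Full ∧ R.Faithful :=
  ⟨spanToSymLens, symLensToSpan, spanToSymLensAdj, mDescr_spanToSymLens,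
    imageSpanDescr_symLensToSpan, symLensToSpan_comp_spanToSymLens,
    spanToSymLensAdj.fullyFaithfulROfIsIsoCounit.full,
    Functor.Faithful.of_comp_eq symLensToSpan_comp_spanToSymLens⟩
end
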